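/- For every integer b ≥ 2, γ(1/b) = b · log( b / ((b-1) σ_b) ), where γ is the generalized Euler-constant function and σ_b the generalized Somos constant. -/

import Mathlib

noncomputable def somosB (b : ℕ) : ℝ :=
  ∏' i : ℕ, ((i : ℝ) + 1) ^ (((b : ℝ) - 1) / (b : ℝ) ^ (i + 1))

noncomputable def eulerGamma (z : ℝ) : ℝ :=
  ∑' i : ℕ, z ^ i * (((i : ℝ) + 1)⁻¹ - Real.log (((i : ℝ) + 2) / ((i : ℝ) + 1)))

/-!
Write `L(x) = ∑ xⁱ log (i + 1)`. Multiplying the series of `γ(x)` by `x`, its harmonic part becomes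
the Mercator series `∑ xⁱ⁺¹/(i+1) = -log (1 - x)`, and its logarithmic part telescopes against the
shift of `L` to `(1 - x) L(x)`. On the other side, the logarithm of the product defining `σ_b` is
`(b - 1)/b · L(1/b)`. Putting `x = 1/b` the two expressions agree.
-/

open Real

lemma abs_inv_natCast_lt_one {b : ℕ} (hb : 1 < b) : |(b : ℝ)⁻¹| < 1 := by
  rw [abs_inv, Nat.abs_cast]
  exact inv_lt_one_of_one_lt₀ (by exact_mod_cast hb)

noncomputable def logSuccSeries (x : ℝ) : ℝ :=
  ∑' i : ℕ, x ^ i * log (i + 1)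

lemma summable_pow_mul_log_succ {x : ℝ} (hx : |x| < 1) :
    Summable fun i : ℕ => x ^ i * log (i + 1) := by
  refine Summable.of_norm_bounded
    (summable_pow_mul_geometric_of_norm_lt_one 1 (r := |x|) (by rwa [norm_of_nonneg (abs_nonneg x)]))
    fun i => ?_
  have hlog : log ((i : ℝ) + 1) ≤ i := by
    linarith [log_le_sub_one_of_pos (x := (i : ℝ) + 1) (by positivity)]
  have hlog₀ : 0 ≤ log ((i : ℝ) + 1) := log_nonneg (by simp)
  rw [norm_mul, norm_pow, norm_of_nonneg hlog₀, pow_one, mul_comm]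
  exact mul_le_mul_of_nonneg_right hlog (by positivity)

lemma hasSum_logSuccSeries {x : ℝ} (hx : |x| < 1) :
    HasSum (fun i : ℕ => x ^ i * log (i + 1)) (logSuccSeries x) :=
  (summable_pow_mul_log_succ hx).hasSum

lemma hasSum_pow_succ_mul_log_succ_div {x : ℝ} (hx : |x| < 1) :
    HasSum (fun i : ℕ => x ^ (i + 1) * log ((i + 2) / (i + 1))) ((1 - x) * logSuccSeries x) := by
  have hL := hasSum_logSuccSeries hx
  have hshift : HasSum (fun i : ℕ => x ^ (i + 1) * log ((i + 1 : ℕ) + 1)) (logSuccSeries x) := by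
    rw [hasSum_nat_add_iff (f := fun i : ℕ => x ^ i * log ((i : ℝ) + 1)) 1]
    simpa using hL
  have hterm : (fun i : ℕ => x ^ (i + 1) * log ((i + 2) / (i + 1))) =
      fun i : ℕ => x ^ (i + 1) * log ((i + 1 : ℕ) + 1) - x * (x ^ i * log (i + 1)) := by
    funext i
    rw [log_div (by positivity) (by positivity)]
    push_cast
    ring_nf
  rw [hterm, sub_mul, one_mul]
  exact hshift.sub (hL.mul_left x)

lemma mul_eulerGamma {x : ℝ} (hx : |x| < 1) :
    x * eulerGamma x = -log (1 - x) - (1 - x) * logSuccSeries x := by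
  have h := (hasSum_pow_div_log_of_abs_lt_one hx).sub (hasSum_pow_succ_mul_log_succ_div hx)
  rw [eulerGamma, ← tsum_mul_left, ← h.tsum_eq]
  congr 1
  funext i
  rw [pow_succ]
  ring

lemma somosB_eq_exp {b : ℕ} (hb : 1 < b) :
    somosB b = exp (((b : ℝ) - 1) / b * logSuccSeries (b : ℝ)⁻¹) := by
  rw [somosB, ← ((hasSum_logSuccSeries (abs_inv_natCast_lt_one hb)).mul_left (((b : ℝ) - 1) / b)).rexp.tprod_eq]
  congr 1
  funext i
  rw [Function.comp_apply, rpow_def_of_pos (by positivity), inv_pow, pow_succ]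
  field_simp

/-- For every integer `b ≥ 2`, `γ(1/b) = b log(b/((b-1)σ_b))`. -/
theorem eulerGamma_eq (b : ℕ) (hb : 2 ≤ b) :
    eulerGamma ((b : ℝ))⁻¹ = (b : ℝ) * Real.log ((b : ℝ) / (((b : ℝ) - 1) * somosB b)) := by
  have hb' : (1 : ℝ) < b := by exact_mod_cast hb
  have hγ := mul_eulerGamma (abs_inv_natCast_lt_one hb)
  have hsub : 1 - (b : ℝ)⁻¹ = ((b : ℝ) - 1) / b := by field_simp
  rw [hsub, log_div (by linarith) (by linarith)] at hγ
  rw [somosB_eq_exp hb, log_div (by linarith) (by positivity),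
    log_mul (by linarith) (exp_ne_zero _), log_exp]
  field_simp at hγ ⊢
  linear_combination hγ
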